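/- Let $u = u(x_1,\dots,x_n)$ be a smooth function on $\mathbb{R}^{2n}$ ($n \geq 3$) depending only on $x_1, \dots, x_n$, with coframe $e^i = dx_i$, $f^j = dy_j - x_1 dx_j$, almost-complex structure $J_n e^k = -f^k$, and $\Omega_n = \sum_{k=1}^n e^k \wedge f^k$. Then for $\alpha = -J_n du - u e^1$ one has $(\Omega_n + d\alpha)^n = \det(I + \mathcal{H}(u))\, \Omega_n^n$, where $\mathcal{H}(u) = (u_{x_i x_j})_{i,j=1}^n$ is the Hessian matrix of $u$. -/

import Mathlib

noncomputable section
open Matrix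
set_option maxHeartbeats 2000000
set_option synthInstance.maxHeartbeats 200000

/-- `ℝ^{2n}` with coordinates `x_i = inl i`, `y_j = inr j`. -/
abbrev Vn (n : ℕ) : Type := Fin n ⊕ Fin n → ℝ

/-- The coordinate differentials as generators of the exterior algebra of covectors. -/
def εn {n : ℕ} (i : Fin n ⊕ Fin n) : ExteriorAlgebra ℝ (Vn n) :=
  ExteriorAlgebra.ι ℝ (Pi.single i 1)

/-- Partial derivative in the `i`-th coordinate direction. -/
def pd {n : ℕ} (i : Fin n ⊕ Fin n) (g : Vn n → ℝ) (p : Vn n) : ℝ :=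
  fderiv ℝ g p (Pi.single i 1)

/-- Second partial derivative `∂ᵢ∂ⱼ`. -/
def pd2 {n : ℕ} (i j : Fin n ⊕ Fin n) (g : Vn n → ℝ) : Vn n → ℝ := pd i (pd j g)

/-- Exterior derivative of a 1-form given by its coordinate components. -/
def d1 {n : ℕ} (a : Vn n → Fin n ⊕ Fin n → ℝ) (p : Vn n) : ExteriorAlgebra ℝ (Vn n) :=
  ∑ i, ∑ j, pd i (fun q => a q j) p • (εn i * εn j)

/-- The coframe element `f^k = dy_k - x₁ dx_k` at `p`, where `i0` is the index of `x₁`. -/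
def fK {n : ℕ} (i0 k : Fin n) (p : Vn n) : ExteriorAlgebra ℝ (Vn n) :=
  εn (Sum.inr k) - p (Sum.inl i0) • εn (Sum.inl k)

/-- The matrix of `J_n` on coordinate covectors: `J e^k = -f^k`, `J f^k = e^k`. -/
def Jn {n : ℕ} (i0 : Fin n) (p : Vn n) : Matrix (Fin n ⊕ Fin n) (Fin n ⊕ Fin n) ℝ :=
  Matrix.fromBlocks (p (Sum.inl i0) • 1) ((1 + p (Sum.inl i0) ^ 2) • 1)
    (-1) (-(p (Sum.inl i0)) • 1)

/-- Coordinate components of `du`. -/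
def dcn {n : ℕ} (u : Vn n → ℝ) : Vn n → Fin n ⊕ Fin n → ℝ := fun p j => pd j u p


section RingLemmas
variable {A : Type*} [Ring A]

lemma sumPowSucc : ∀ (m : ℕ) (x : Fin m → A), (∀ s t, Commute (x s) (x t)) →
    (∀ s, x s * x s = 0) → (∑ s, x s) ^ (m + 1) = 0 := by
  intro m
  induction m with
  | zero => intro x _ _; simp
  | succ m ih =>
    intro x hc h0
    rw [Fin.sum_univ_succ]
    have hcs : Commute (x 0) (∑ i : Fin m, x i.succ) :=
      Commute.sum_right _ _ _ fun i _ => hc 0 i.succ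
    rw [hcs.add_pow]
    apply Finset.sum_eq_zero
    intro k hk
    rcases Nat.lt_or_ge k 1 with hk1 | hk1
    · interval_cases k
      have : (∑ i : Fin m, x i.succ) ^ (m + 1 + 1 - 0) =
          (∑ i : Fin m, x i.succ) ^ (m + 1) * (∑ i : Fin m, x i.succ) := by
        rw [← pow_succ]; norm_num
      rw [this, ih _ (fun s t => hc s.succ t.succ) (fun s => h0 s.succ)]
      simp
    rcases Nat.lt_or_ge k 2 with hk2 | hk2
    · interval_cases k
      have : m + 1 + 1 - 1 = m + 1 := rfl
      rw [this, ih _ (fun s t => hc s.succ t.succ) (fun s => h0 s.succ)]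
      simp
    · have : x 0 ^ k = 0 := by
        have hx2 : x 0 ^ 2 = 0 := by rw [pow_two]; exact h0 0
        calc x 0 ^ k = x 0 ^ 2 * x 0 ^ (k - 2) := by rw [← pow_add]; congr 1; omega
        _ = 0 := by rw [hx2, zero_mul]
      rw [this, zero_mul, zero_mul]

lemma sumPow : ∀ (m : ℕ) (x : Fin m → A), (∀ s t, Commute (x s) (x t)) →
    (∀ s, x s * x s = 0) →
    (∑ s, x s) ^ m = m.factorial • (List.ofFn x).prod := by
  intro m
  induction m with
  | zero => intro x _ _; simp
  | succ m ih =>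
    intro x hc h0
    rw [Fin.sum_univ_succ]
    have hcs : Commute (x 0) (∑ i : Fin m, x i.succ) :=
      Commute.sum_right _ _ _ fun i _ => hc 0 i.succ
    rw [hcs.add_pow]
    rw [Finset.sum_eq_single_of_mem 1 (by simp)]
    · simp only [Nat.add_sub_cancel, pow_one]
      rw [ih _ (fun s t => hc s.succ t.succ) (fun s => h0 s.succ)]
      rw [List.ofFn_succ, List.prod_cons]
      simp only [Nat.choose_one_right]
      rw [mul_smul_comm, smul_mul_assoc, ← nsmul_eq_mul', smul_smul, Nat.mul_comm,
        ← Nat.factorial_succ]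
    · intro k _ hk1
      rcases Nat.lt_or_ge k 1 with h | h
      · interval_cases k
        have : (∑ i : Fin m, x i.succ) ^ (m + 1 - 0) = (∑ i : Fin m, x i.succ) ^ (m + 1) := rfl
        rw [this, sumPowSucc _ _ (fun s t => hc s.succ t.succ) (fun s => h0 s.succ)]
        simp
      · have hk2 : 2 ≤ k := by omega
        have : x 0 ^ k = 0 := by
          have hx2 : x 0 ^ 2 = 0 := by rw [pow_two]; exact h0 0
          calc x 0 ^ k = x 0 ^ 2 * x 0 ^ (k - 2) := by rw [← pow_add]; congr 1; omega
          _ = 0 := by rw [hx2, zero_mul]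
        rw [this, zero_mul, zero_mul]

lemma mul_ofFn_zero (z : A) : ∀ {m : ℕ} (y : Fin m → A), (∀ k, Commute z (y k)) →
    ∀ j, z * y j = 0 → z * (List.ofFn y).prod = 0 := by
  intro m
  induction m with
  | zero => intro y _ j; exact j.elim0
  | succ m ih =>
    intro y hcz j hz
    rw [List.ofFn_succ, List.prod_cons]
    by_cases hj : j = 0
    · subst hj
      rw [← mul_assoc, hz, zero_mul]
    · rw [← mul_assoc, hcz 0, mul_assoc,
        ih (fun i => y i.succ) (fun k => hcz k.succ) (j.pred hj)
          (by show z * y (j.pred hj).succ = 0; rwa [Fin.succ_pred]), mul_zero]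

lemma ofFn_prod_zero : ∀ {m : ℕ} (y : Fin m → A), (∀ s t, Commute (y s) (y t)) →
    ∀ i j, i ≠ j → y i * y j = 0 → (List.ofFn y).prod = 0 := by
  intro m
  induction m with
  | zero => intro y _ i; exact i.elim0
  | succ m ih =>
    intro y hc i j hij hz
    rw [List.ofFn_succ, List.prod_cons]
    by_cases hi : i = 0
    · subst hi
      exact mul_ofFn_zero (y 0) (fun k => y k.succ) (fun k => hc 0 k.succ)
        (j.pred (Ne.symm hij))
        (by show y 0 * y (j.pred (Ne.symm hij)).succ = 0; rwa [Fin.succ_pred])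
    · by_cases hj : j = 0
      · subst hj
        refine mul_ofFn_zero (y 0) (fun k => y k.succ) (fun k => hc 0 k.succ)
          (i.pred hi) ?_
        show y 0 * y (i.pred hi).succ = 0
        rw [Fin.succ_pred]
        exact (hc i 0).eq ▸ hz
      · rw [ih (fun k => y k.succ) (fun s t => hc s.succ t.succ) (i.pred hi) (j.pred hj)
          (fun h => hij (by rw [← Fin.succ_pred i hi, ← Fin.succ_pred j hj, h]))
          (by show y (i.pred hi).succ * y (j.pred hj).succ = 0
              rw [Fin.succ_pred, Fin.succ_pred]; exact hz), mul_zero]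

end RingLemmas

section ExtLemmas
variable {R : Type*} {M : Type*} [CommRing R] [AddCommGroup M] [Module R M]

local notation "ιι" => ExteriorAlgebra.ι R

lemma h_swap (a b : M) : ιι a * ιι b = -(ιι b * ιι a) :=
  eq_neg_of_add_eq_zero_left (ExteriorAlgebra.ι_add_mul_swap a b)

lemma h_move (a b : M) (t : ExteriorAlgebra R M) :
    ιι a * (ιι b * t) = -(ιι b * (ιι a * t)) := by
  rw [← mul_assoc, h_swap a b, neg_mul, mul_assoc]

lemma h_comm1 (a b c : M) : Commute (ιι a * ιι b) (ιι c) := by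
  show _ = _
  rw [mul_assoc, h_swap b c, mul_neg, ← mul_assoc, h_swap a c, neg_mul, neg_neg, mul_assoc]

lemma h_comm2 (a b c d : M) : Commute (ιι a * ιι b) (ιι c * ιι d) :=
  (h_comm1 a b c).mul_right (h_comm1 a b d)

lemma h_zero2 (a b c : M) : (ιι a * ιι c) * (ιι b * ιι c) = 0 := by
  rw [mul_assoc, h_move c b (ιι c), ExteriorAlgebra.ι_sq_zero, mul_zero, neg_zero, mul_zero]

variable (R) in
/-- `b ↦ (ι v 0 * ι b 0) * ⋯ * (ι v (n-1) * ι b (n-1))` as an alternating map in `b`. -/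
def pairAlt (n : ℕ) (v : Fin n → M) : M [⋀^Fin n]→ₗ[R] ExteriorAlgebra R M where
  toMultilinearMap := (MultilinearMap.mkPiAlgebraFin R n _).compLinearMap
    fun s => (LinearMap.mulLeft R (ιι (v s))).comp (ExteriorAlgebra.ι R)
  map_eq_zero_of_eq' := by
    intro b i j hb hij
    show (List.ofFn fun s => ιι (v s) * ιι (b s)).prod = 0
    exact ofFn_prod_zero _ (fun s t => h_comm2 _ _ _ _) i j hij
      (by rw [hb]; exact h_zero2 _ _ _)

lemma pairAlt_apply (n : ℕ) (v b : Fin n → M) :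
    pairAlt R n v b = (List.ofFn fun s => ιι (v s) * ιι (b s)).prod := rfl

end ExtLemmas

section Det
variable {R : Type*} [CommRing R] {M : Type*} [AddCommGroup M] [Module R M]
  {N : Type*} [AddCommGroup N] [Module R N]

lemma altC {ι : Type*} [Fintype ι] [DecidableEq ι] (e : Module.Basis ι R M)
    (f : M [⋀^ι]→ₗ[R] N) : f = (e.det).smulRight (f e) := by
  refine Module.Basis.ext_alternating e fun i h => ?_
  let σ : Equiv.Perm ι := Equiv.ofBijective i (Finite.injective_iff_bijective.1 h)
  change f (e ∘ σ) = ((e.det).smulRight (f e)) (e ∘ σ)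
  rw [AlternatingMap.smulRight_apply, AlternatingMap.map_perm, AlternatingMap.map_perm,
    Module.Basis.det_self]
  simp

lemma altD {n : ℕ} (f : (Fin n → R) [⋀^Fin n]→ₗ[R] N) (w : Fin n → (Fin n → R)) :
    f w = (Matrix.of w).det • f (fun i => Pi.single i 1) := by
  have h := altC (Pi.basisFun R (Fin n)) f
  have hw : f w = (Pi.basisFun R (Fin n)).det w • f (Pi.basisFun R (Fin n)) := by
    conv_lhs => rw [h]
    rfl
  have hb : ⇑(Pi.basisFun R (Fin n)) = fun i : Fin n => (Pi.single i (1:R) : Fin n → R) := by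
    funext i
    simp [Pi.basisFun_apply]
  rw [hw, hb, Pi.basisFun_det]
  rfl

/-- The key alternating-map determinant identity. -/
lemma altE {n : ℕ} (f : M [⋀^Fin n]→ₗ[R] N) (g : Matrix (Fin n) (Fin n) R)
    (v : Fin n → M) :
    f (fun i => ∑ j, g i j • v j) = g.det • f v := by
  classical
  let L : (Fin n → R) →ₗ[R] M := ∑ j, (LinearMap.proj j).smulRight (v j)
  have hL : ∀ c : Fin n → R, L c = ∑ j, c j • v j := by
    intro c
    simp [L, LinearMap.sum_apply]
  have h := altD (f.compLinearMap L) (fun i => g i)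
  rw [AlternatingMap.compLinearMap_apply, AlternatingMap.compLinearMap_apply] at h
  have h1 : (fun i => L ((fun i' => g i') i)) = fun i => ∑ j, g i j • v j := by
    funext i; rw [hL]
  have h2 : (fun i => L (Pi.single i 1)) = v := by
    funext i
    rw [hL]
    simp [Pi.single_apply]
  rw [h1, h2] at h
  convert h using 2
  rfl

end Det

section Key
variable {R : Type*} [CommRing R] {M : Type*} [AddCommGroup M] [Module R M]
local notation "ιι" => ExteriorAlgebra.ι R

lemma keyAlg (n : ℕ) (v w : Fin n → M) (g : Matrix (Fin n) (Fin n) R) :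
    (∑ s, ιι (v s) * ιι (∑ r, g s r • w r)) ^ n
      = g.det • (∑ s, ιι (v s) * ιι (w s)) ^ n := by
  have hL : (∑ s, ιι (v s) * ιι (∑ r, g s r • w r)) ^ n
      = n.factorial • (List.ofFn fun s => ιι (v s) * ιι ((fun t => ∑ r, g t r • w r) s)).prod := by
    have := sumPow n (fun s => ιι (v s) * ιι (∑ r, g s r • w r))
      (fun s t => h_comm2 _ _ _ _) (fun s => by
        have := h_zero2 (R := R) (v s) (v s) (∑ r, g s r • w r)
        exact this)
    simpa [Finset.card_univ] using this
  have hR : (∑ s, ιι (v s) * ιι (w s)) ^ n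
      = n.factorial • (List.ofFn fun s => ιι (v s) * ιι (w s)).prod := by
    have := sumPow n (fun s => ιι (v s) * ιι (w s))
      (fun s t => h_comm2 _ _ _ _) (fun s => h_zero2 (R := R) (v s) (v s) (w s))
    simpa using this
  rw [hL, hR]
  have hAlt : (List.ofFn fun s => ιι (v s) * ιι ((fun t => ∑ r, g t r • w r) s)).prod
      = g.det • (List.ofFn fun s => ιι (v s) * ιι (w s)).prod := by
    have h1 : pairAlt R n v (fun t => ∑ r, g t r • w r) = g.det • pairAlt R n v w :=
      altE (pairAlt R n v) g w
    rw [pairAlt_apply, pairAlt_apply] at h1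
    exact h1
  rw [hAlt, smul_comm]

end Key

section Analysis
variable {n : ℕ}

lemma trans_inv (u : Vn n → ℝ)
    (hinv : ∀ (p : Vn n) (t : ℝ) (k : Fin n), u (Function.update p (Sum.inr k) t) = u p)
    (q : Vn n) (k : Fin n) (t : ℝ) :
    u (q + t • (Pi.single (Sum.inr k) 1 : Vn n)) = u q := by
  have h : q + t • (Pi.single (Sum.inr k) 1 : Vn n)
      = Function.update q (Sum.inr k) (q (Sum.inr k) + t) := by
    funext j
    by_cases hj : j = Sum.inr k
    · subst hj
      simp [Function.update_self, Pi.single_apply]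
    · simp [Function.update_of_ne hj, Pi.single_apply, hj]
  rw [h, hinv]

lemma dir_deriv_zero (g : Vn n → ℝ) (hg : Differentiable ℝ g) (e : Vn n)
    (h : ∀ (q : Vn n) (t : ℝ), g (q + t • e) = g q) (q : Vn n) : fderiv ℝ g q e = 0 := by
  have hγ : HasDerivAt (fun t : ℝ => q + t • e) e 0 := by
    have h1 : HasDerivAt (fun t : ℝ => t • e) ((1 : ℝ) • e) 0 := (hasDerivAt_id 0).smul_const e
    simpa using h1.const_add q
  have h2 : HasDerivAt (fun t : ℝ => g (q + t • e)) (fderiv ℝ g q e) 0 := by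
    have h3 := (hg (q + (0 : ℝ) • e)).hasFDerivAt.comp_hasDerivAt 0 hγ
    simpa [Function.comp_def] using h3
  have h4 : (fun t : ℝ => g (q + t • e)) = fun _ => g q := funext fun t => h q t
  rw [h4] at h2
  exact h2.unique (hasDerivAt_const _ _)

lemma fderiv_translate (g : Vn n → ℝ) (hg : Differentiable ℝ g) (c : Vn n)
    (h : ∀ x, g (x + c) = g x) (q : Vn n) : fderiv ℝ g (q + c) = fderiv ℝ g q := by
  have h1 : HasFDerivAt (fun x : Vn n => g (x + c)) (fderiv ℝ g (q + c)) q := by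
    have h2 := (hg (q + c)).hasFDerivAt.comp q ((hasFDerivAt_id q).add_const c)
    simpa [Function.comp_def] using h2
  have h2 : (fun x : Vn n => g (x + c)) = g := funext h
  rw [h2] at h1
  exact (h1.fderiv).symm

end Analysis

/-- On the `2n`-dimensional generalization of the Kodaira–Thurston manifold, for smooth
`u = u(x₁,…,x_n)` (independent of all `y` coordinates) and `α = -J_n du - u e¹`,
the Calabi–Yau expression reduces to the Monge–Ampère determinant:
`(Ω_n + dα)^n = det(I + Hess u) Ω_n^n`. -/
theorem stmt_17 (n : ℕ) (hn : 3 ≤ n) (i0 : Fin n) (hi0 : (i0 : ℕ) = 0)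
    (u : Vn n → ℝ) (hu : ContDiff ℝ (⊤ : ℕ∞) u)
    (hinv : ∀ (p : Vn n) (t : ℝ) (k : Fin n),
      u (Function.update p (Sum.inr k) t) = u p)
    (α : Vn n → Fin n ⊕ Fin n → ℝ)
    (hα : ∀ p : Vn n, α p =
      -((Jn i0 p).mulVec (dcn u p)) - u p • (Pi.single (Sum.inl i0) (1 : ℝ) : Vn n))
    (p : Vn n) :
    ((∑ k : Fin n, εn (Sum.inl k) * fK i0 k p) + d1 α p) ^ n =
      (Matrix.det (1 + Matrix.of fun i j : Fin n => pd2 (Sum.inl i) (Sum.inl j) u p)) •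
        (∑ k : Fin n, εn (Sum.inl k) * fK i0 k p) ^ n := by
  classical
  let v : Fin n → Vn n := fun s => Pi.single (Sum.inl s) 1
  let w : Fin n → Vn n := fun r => Pi.single (Sum.inr r) 1 - p (Sum.inl i0) • (Pi.single (Sum.inl r) 1 : Vn n)
  set H : Matrix (Fin n) (Fin n) ℝ := Matrix.of fun s r => pd2 (Sum.inl s) (Sum.inl r) u p
    with hHdef
  set Mt : Matrix (Fin n) (Fin n) ℝ := 1 + H with hMtdef
  have hεn : ∀ j : Fin n ⊕ Fin n, εn (n := n) j = ExteriorAlgebra.ι ℝ (Pi.single j 1) :=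
    fun j => rfl
  have hv : ∀ s : Fin n, ExteriorAlgebra.ι ℝ (v s) = εn (Sum.inl s) := fun s => rfl
  have hιw : ∀ k : Fin n, ExteriorAlgebra.ι ℝ (w k)
      = εn (Sum.inr k) - p (Sum.inl i0) • εn (Sum.inl k) := by
    intro k
    rw [show (w k) = Pi.single (Sum.inr k) 1 - p (Sum.inl i0) • (Pi.single (Sum.inl k) 1 : Vn n)
        from rfl, map_sub, LinearMap.map_smul, hεn (Sum.inr k), hεn (Sum.inl k)]
  have hfK : ∀ k : Fin n, εn (Sum.inl k) * fK i0 k p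
      = ExteriorAlgebra.ι ℝ (v k) * ExteriorAlgebra.ι ℝ (w k) := by
    intro k
    rw [hιw k, hv k]
    rfl
  -- analysis facts
  have htrans : ∀ (q : Vn n) (k : Fin n) (t : ℝ), u (q + t • (Pi.single (Sum.inr k) 1 : Vn n)) = u q :=
    fun q k t => trans_inv u hinv q k t
  have hy0 : ∀ (q : Vn n) (k : Fin n), pd (Sum.inr k) u q = 0 := by
    intro q k
    exact dir_deriv_zero u (hu.differentiable (by simp)) _ (fun q t => htrans q k t) q
  have hUsm : ∀ j : Fin n ⊕ Fin n, ContDiff ℝ (⊤ : ℕ∞) (pd j u) := by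
    intro j
    show ContDiff ℝ (⊤ : ℕ∞) fun q => (fderiv ℝ u q) (Pi.single j 1)
    exact (hu.fderiv_right (by simp)).clm_apply contDiff_const
  have htransU : ∀ (j : Fin n ⊕ Fin n) (q : Vn n) (k : Fin n) (t : ℝ),
      pd j u (q + t • (Pi.single (Sum.inr k) 1 : Vn n)) = pd j u q := by
    intro j q k t
    show fderiv ℝ u (q + t • (Pi.single (Sum.inr k) 1 : Vn n)) (Pi.single j 1) = _
    rw [fderiv_translate u (hu.differentiable (by simp)) _ (fun x => htrans x k t) q]
    rfl
  have hy2 : ∀ (k : Fin n) (j : Fin n ⊕ Fin n) (q : Vn n), pd2 (Sum.inr k) j u q = 0 := by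
    intro k j q
    exact dir_deriv_zero (pd j u) ((hUsm j).differentiable (by simp)) _
      (fun q t => htransU j q k t) q
  -- formulas for α components
  have hαl : ∀ r : Fin n, (fun q => α q (Sum.inl r))
      = fun q => -(q (Sum.inl i0) * pd (Sum.inl r) u q)
        - u q * (if r = i0 then 1 else 0) := by
    intro r
    funext q
    rw [hα q]
    simp only [Pi.sub_apply, Pi.neg_apply, Pi.smul_apply, smul_eq_mul]
    rw [Matrix.mulVec]
    simp only [Jn, dcn, dotProduct, Fintype.sum_sum_type,
      Matrix.fromBlocks_apply₁₁, Matrix.fromBlocks_apply₁₂, Matrix.smul_apply,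
      Matrix.one_apply, smul_eq_mul, mul_ite, mul_one, mul_zero, ite_mul, zero_mul,
      Finset.sum_ite_eq, Finset.mem_univ, if_true, hy0, Pi.single_apply, Sum.inl.injEq]
    ring_nf
    simp [hy0]
    try rw [sub_eq_add_neg]
  have hαr : ∀ r : Fin n, (fun q => α q (Sum.inr r)) = pd (Sum.inl r) u := by
    intro r
    funext q
    rw [hα q]
    simp only [Pi.sub_apply, Pi.neg_apply, Pi.smul_apply, smul_eq_mul]
    rw [Matrix.mulVec]
    simp only [Jn, dcn, dotProduct, Fintype.sum_sum_type,
      Matrix.fromBlocks_apply₂₁, Matrix.fromBlocks_apply₂₂, Matrix.smul_apply,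
      Matrix.neg_apply, Matrix.one_apply, smul_eq_mul, mul_ite, mul_one, mul_zero,
      ite_mul, zero_mul, neg_mul,
      Finset.sum_ite_eq, Finset.mem_univ, if_true, hy0, Pi.single_apply]
    ring_nf
    simp [hy0]
  -- derivatives of α components at p
  have hdl : ∀ (i : Fin n ⊕ Fin n) (r : Fin n),
      pd i (fun q => α q (Sum.inl r)) p
        = -((Pi.single i (1 : ℝ) : Vn n) (Sum.inl i0) * pd (Sum.inl r) u p
            + p (Sum.inl i0) * pd2 i (Sum.inl r) u p)
          - pd i u p * (if r = i0 then 1 else 0) := by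
    intro i r
    have hUr : HasFDerivAt (pd (Sum.inl r) u) (fderiv ℝ (pd (Sum.inl r) u) p) p :=
      (((hUsm (Sum.inl r)).differentiable (by simp)) p).hasFDerivAt
    have hup : HasFDerivAt u (fderiv ℝ u p) p := ((hu.differentiable (by simp)) p).hasFDerivAt
    have hproj : HasFDerivAt (fun q : Vn n => q (Sum.inl i0))
        (ContinuousLinearMap.proj (Sum.inl i0) : Vn n →L[ℝ] ℝ) p :=
      (ContinuousLinearMap.proj (Sum.inl i0) : Vn n →L[ℝ] ℝ).hasFDerivAt
    have htot := ((hproj.mul hUr).neg).sub (hup.mul_const (if r = i0 then (1:ℝ) else 0))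
    have h5 : fderiv ℝ (fun q => -(q (Sum.inl i0) * pd (Sum.inl r) u q)
        - u q * (if r = i0 then 1 else 0)) p
        = (-(p (Sum.inl i0) • fderiv ℝ (pd (Sum.inl r) u) p
            + pd (Sum.inl r) u p • (ContinuousLinearMap.proj (Sum.inl i0) : Vn n →L[ℝ] ℝ))
          - (if r = i0 then (1:ℝ) else 0) • fderiv ℝ u p) := htot.fderiv
    rw [hαl r]
    rw [show pd i (fun q => -(q (Sum.inl i0) * pd (Sum.inl r) u q)
        - u q * (if r = i0 then 1 else 0)) p
        = fderiv ℝ (fun q => -(q (Sum.inl i0) * pd (Sum.inl r) u q)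
          - u q * (if r = i0 then 1 else 0)) p (Pi.single i 1 : Vn n) from rfl]
    rw [h5]
    simp only [ContinuousLinearMap.coe_sub', Pi.sub_apply, ContinuousLinearMap.neg_apply,
      ContinuousLinearMap.coe_smul', ContinuousLinearMap.add_apply, Pi.smul_apply,
      ContinuousLinearMap.smul_apply, ContinuousLinearMap.proj_apply, smul_eq_mul,
      ContinuousLinearMap.coe_add']
    have e2 : fderiv ℝ (pd (Sum.inl r) u) p (Pi.single i (1:ℝ) : Vn n)
        = pd2 i (Sum.inl r) u p := rfl
    have e3 : fderiv ℝ u p (Pi.single i (1:ℝ) : Vn n) = pd i u p := rfl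
    rw [e2, e3]
    ring
  have hdr : ∀ (i : Fin n ⊕ Fin n) (r : Fin n),
      pd i (fun q => α q (Sum.inr r)) p = pd2 i (Sum.inl r) u p := by
    intro i r
    rw [hαr r]
    rfl
  -- expansion of d1 α p
  have d1exp : d1 α p
      = (∑ s : Fin n, ∑ r : Fin n,
          (-((if i0 = s then (1:ℝ) else 0) * pd (Sum.inl r) u p
              + p (Sum.inl i0) * pd2 (Sum.inl s) (Sum.inl r) u p)
            - pd (Sum.inl s) u p * (if r = i0 then 1 else 0))
            • (εn (Sum.inl s) * εn (Sum.inl r)))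
        + ∑ s : Fin n, ∑ r : Fin n,
            pd2 (Sum.inl s) (Sum.inl r) u p • (εn (Sum.inl s) * εn (Sum.inr r)) := by
    rw [d1]
    rw [Fintype.sum_sum_type]
    have hzero : ∀ k : Fin n,
        (∑ j, pd (Sum.inr k) (fun q => α q j) p • (εn (Sum.inr k) * εn j)) = 0 := by
      intro k
      rw [Fintype.sum_sum_type]
      have h1 : ∀ r : Fin n, pd (Sum.inr k) (fun q => α q (Sum.inl r)) p = 0 := by
        intro r
        rw [hdl]
        simp [Pi.single_apply, hy0, hy2]
      have h2 : ∀ r : Fin n, pd (Sum.inr k) (fun q => α q (Sum.inr r)) p = 0 := by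
        intro r
        rw [hdr]
        exact hy2 k (Sum.inl r) p
      simp [h1, h2]
    rw [Finset.sum_congr rfl fun k (_ : k ∈ Finset.univ) => hzero k]
    simp only [Finset.sum_const_zero, add_zero]
    have hin : ∀ s : Fin n,
        (∑ j, pd (Sum.inl s) (fun q => α q j) p • (εn (Sum.inl s) * εn j))
        = (∑ r : Fin n,
            (-((if i0 = s then (1:ℝ) else 0) * pd (Sum.inl r) u p
                + p (Sum.inl i0) * pd2 (Sum.inl s) (Sum.inl r) u p)
              - pd (Sum.inl s) u p * (if r = i0 then 1 else 0))
              • (εn (Sum.inl s) * εn (Sum.inl r)))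
          + ∑ r : Fin n,
              pd2 (Sum.inl s) (Sum.inl r) u p • (εn (Sum.inl s) * εn (Sum.inr r)) := by
      intro s
      rw [Fintype.sum_sum_type]
      congr 1
      · refine Finset.sum_congr rfl fun r _ => ?_
        rw [hdl]
        congr 2
        simp [Pi.single_apply, Sum.inl.injEq]
      · refine Finset.sum_congr rfl fun r _ => ?_
        rw [hdr]
    rw [Finset.sum_congr rfl fun s (_ : s ∈ Finset.univ) => hin s]
    rw [Finset.sum_add_distrib]
  -- the cancellation
  have hswap0 : ∀ r : Fin n,
      εn (Sum.inl i0) * εn (Sum.inl r) + εn (Sum.inl r) * εn (Sum.inl i0) = (0 : ExteriorAlgebra ℝ (Vn n)) := by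
    intro r
    exact ExteriorAlgebra.ι_add_mul_swap _ _
  have hc1 : (∑ s : Fin n, ∑ r : Fin n,
      (if i0 = s then pd (Sum.inl r) u p else 0) • (εn (Sum.inl s) * εn (Sum.inl r)))
      = ∑ r : Fin n, pd (Sum.inl r) u p • (εn (Sum.inl i0) * εn (Sum.inl r)) := by
    calc (∑ s : Fin n, ∑ r : Fin n,
        (if i0 = s then pd (Sum.inl r) u p else 0) • (εn (Sum.inl s) * εn (Sum.inl r)))
        = ∑ s : Fin n, (if i0 = s then
            ∑ r : Fin n, pd (Sum.inl r) u p • (εn (Sum.inl s) * εn (Sum.inl r)) else 0) := by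
          refine Finset.sum_congr rfl fun s _ => ?_
          split_ifs with h <;> simp [h]
      _ = _ := by rw [Finset.sum_ite_eq]; simp
  have hc2 : (∑ s : Fin n, ∑ r : Fin n,
      (if r = i0 then pd (Sum.inl s) u p else 0) • (εn (Sum.inl s) * εn (Sum.inl r)))
      = ∑ s : Fin n, pd (Sum.inl s) u p • (εn (Sum.inl s) * εn (Sum.inl i0)) := by
    refine Finset.sum_congr rfl fun s _ => ?_
    calc (∑ r : Fin n,
        (if r = i0 then pd (Sum.inl s) u p else 0) • (εn (Sum.inl s) * εn (Sum.inl r)))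
        = ∑ r : Fin n, (if r = i0 then
            pd (Sum.inl s) u p • (εn (Sum.inl s) * εn (Sum.inl r)) else 0) := by
          refine Finset.sum_congr rfl fun r _ => ?_
          split_ifs with h <;> simp [h]
      _ = _ := by rw [Finset.sum_ite_eq']; simp
  have hpos : (∑ s : Fin n, ∑ r : Fin n,
      ((if i0 = s then pd (Sum.inl r) u p else 0)
        + (if r = i0 then pd (Sum.inl s) u p else 0))
        • (εn (Sum.inl s) * εn (Sum.inl r))) = 0 := by
    have hsplit : (∑ s : Fin n, ∑ r : Fin n,
        ((if i0 = s then pd (Sum.inl r) u p else 0)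
          + (if r = i0 then pd (Sum.inl s) u p else 0))
          • (εn (Sum.inl s) * εn (Sum.inl r)))
        = (∑ s : Fin n, ∑ r : Fin n,
            (if i0 = s then pd (Sum.inl r) u p else 0) • (εn (Sum.inl s) * εn (Sum.inl r)))
          + (∑ s : Fin n, ∑ r : Fin n,
            (if r = i0 then pd (Sum.inl s) u p else 0) • (εn (Sum.inl s) * εn (Sum.inl r))) := by
      rw [← Finset.sum_add_distrib]
      refine Finset.sum_congr rfl fun s _ => ?_
      rw [← Finset.sum_add_distrib]
      refine Finset.sum_congr rfl fun r _ => ?_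
      rw [add_smul]
    rw [hsplit, hc1, hc2, ← Finset.sum_add_distrib]
    refine Finset.sum_eq_zero fun r _ => ?_
    rw [← smul_add, hswap0, smul_zero]
  have hcancel : (∑ s : Fin n, ∑ r : Fin n,
      (-((if i0 = s then pd (Sum.inl r) u p else 0)
        + (if r = i0 then pd (Sum.inl s) u p else 0)))
        • (εn (Sum.inl s) * εn (Sum.inl r))) = 0 := by
    have : ∀ (s r : Fin n),
        (-((if i0 = s then pd (Sum.inl r) u p else 0)
          + (if r = i0 then pd (Sum.inl s) u p else 0)))
          • (εn (Sum.inl s) * εn (Sum.inl r))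
        = -(((if i0 = s then pd (Sum.inl r) u p else 0)
          + (if r = i0 then pd (Sum.inl s) u p else 0))
          • (εn (Sum.inl s) * εn (Sum.inl r))) := fun s r => neg_smul _ _
    simp only [this, Finset.sum_neg_distrib, hpos, neg_zero]
  -- canonical forms
  have canR : (∑ s : Fin n, ExteriorAlgebra.ι ℝ (v s)
      * ExteriorAlgebra.ι ℝ (∑ r : Fin n, Mt s r • w r))
      = (∑ s : Fin n, ExteriorAlgebra.ι ℝ (v s) * ExteriorAlgebra.ι ℝ (w s))
        + ((∑ s : Fin n, ∑ r : Fin n,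
            pd2 (Sum.inl s) (Sum.inl r) u p • (εn (Sum.inl s) * εn (Sum.inr r)))
          - ∑ s : Fin n, ∑ r : Fin n,
            (p (Sum.inl i0) * pd2 (Sum.inl s) (Sum.inl r) u p) • (εn (Sum.inl s) * εn (Sum.inl r))) := by
    have step1 : (∑ s : Fin n, ExteriorAlgebra.ι ℝ (v s)
        * ExteriorAlgebra.ι ℝ (∑ r : Fin n, Mt s r • w r))
        = ∑ s : Fin n, ∑ r : Fin n,
            Mt s r • (ExteriorAlgebra.ι ℝ (v s) * ExteriorAlgebra.ι ℝ (w r)) := by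
      refine Finset.sum_congr rfl fun s _ => ?_
      rw [map_sum, Finset.mul_sum]
      refine Finset.sum_congr rfl fun r _ => ?_
      rw [LinearMap.map_smul, mul_smul_comm]
    rw [step1]
    have step2 : ∀ (s r : Fin n),
        Mt s r • (ExteriorAlgebra.ι ℝ (v s) * ExteriorAlgebra.ι ℝ (w r))
        = (if s = r then (1:ℝ) else 0) • (ExteriorAlgebra.ι ℝ (v s) * ExteriorAlgebra.ι ℝ (w r))
          + (pd2 (Sum.inl s) (Sum.inl r) u p • (εn (Sum.inl s) * εn (Sum.inr r))
            - (p (Sum.inl i0) * pd2 (Sum.inl s) (Sum.inl r) u p) • (εn (Sum.inl s) * εn (Sum.inl r))) := by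
      intro s r
      have hM : Mt s r = (if s = r then (1:ℝ) else 0) + pd2 (Sum.inl s) (Sum.inl r) u p := by
        show (1 + H) s r = _
        rw [Matrix.add_apply, Matrix.one_apply]
        rfl
      rw [hM, add_smul]
      congr 1
      have hvw : ExteriorAlgebra.ι ℝ (v s) * ExteriorAlgebra.ι ℝ (w r)
          = εn (Sum.inl s) * εn (Sum.inr r) - p (Sum.inl i0) • (εn (Sum.inl s) * εn (Sum.inl r)) := by
        rw [hιw r]
        show εn (Sum.inl s) * (εn (Sum.inr r) - p (Sum.inl i0) • εn (Sum.inl r)) = _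
        rw [mul_sub, mul_smul_comm]
      rw [hvw, smul_sub, smul_smul, mul_comm (pd2 (Sum.inl s) (Sum.inl r) u p) (p (Sum.inl i0))]
    rw [Finset.sum_congr rfl fun s (_ : s ∈ Finset.univ) =>
      Finset.sum_congr rfl fun r (_ : r ∈ Finset.univ) => step2 s r]
    simp only [Finset.sum_add_distrib, Finset.sum_sub_distrib]
    congr 1
    refine Finset.sum_congr rfl fun s _ => ?_
    simp [ite_smul, Finset.sum_ite_eq]
  -- canonical form of the left-hand side
  have canL : (∑ k : Fin n, εn (Sum.inl k) * fK i0 k p) + d1 α p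
      = (∑ s : Fin n, ExteriorAlgebra.ι ℝ (v s) * ExteriorAlgebra.ι ℝ (w s))
        + ((∑ s : Fin n, ∑ r : Fin n,
            pd2 (Sum.inl s) (Sum.inl r) u p • (εn (Sum.inl s) * εn (Sum.inr r)))
          - ∑ s : Fin n, ∑ r : Fin n,
            (p (Sum.inl i0) * pd2 (Sum.inl s) (Sum.inl r) u p) • (εn (Sum.inl s) * εn (Sum.inl r))) := by
    rw [d1exp]
    rw [show (∑ k : Fin n, εn (Sum.inl k) * fK i0 k p)
        = ∑ s : Fin n, ExteriorAlgebra.ι ℝ (v s) * ExteriorAlgebra.ι ℝ (w s) from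
      Finset.sum_congr rfl fun k _ => hfK k]
    have hsplitA : (∑ s : Fin n, ∑ r : Fin n,
        (-((if i0 = s then (1:ℝ) else 0) * pd (Sum.inl r) u p
            + p (Sum.inl i0) * pd2 (Sum.inl s) (Sum.inl r) u p)
          - pd (Sum.inl s) u p * (if r = i0 then 1 else 0))
          • (εn (Sum.inl s) * εn (Sum.inl r)))
        = (∑ s : Fin n, ∑ r : Fin n,
            (-(p (Sum.inl i0) * pd2 (Sum.inl s) (Sum.inl r) u p)) • (εn (Sum.inl s) * εn (Sum.inl r)))
          + (∑ s : Fin n, ∑ r : Fin n,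
            (-((if i0 = s then pd (Sum.inl r) u p else 0)
              + (if r = i0 then pd (Sum.inl s) u p else 0)))
              • (εn (Sum.inl s) * εn (Sum.inl r))) := by
      rw [← Finset.sum_add_distrib]
      refine Finset.sum_congr rfl fun s _ => ?_
      rw [← Finset.sum_add_distrib]
      refine Finset.sum_congr rfl fun r _ => ?_
      rw [← add_smul]
      congr 1
      split_ifs <;> ring
    rw [hsplitA, hcancel, add_zero]
    have hneg : (∑ s : Fin n, ∑ r : Fin n,
        (-(p (Sum.inl i0) * pd2 (Sum.inl s) (Sum.inl r) u p)) • (εn (Sum.inl s) * εn (Sum.inl r)))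
        = -(∑ s : Fin n, ∑ r : Fin n,
            (p (Sum.inl i0) * pd2 (Sum.inl s) (Sum.inl r) u p) • (εn (Sum.inl s) * εn (Sum.inl r))) := by
      simp [neg_smul, Finset.sum_neg_distrib]
    rw [hneg]
    abel
  -- conclusion
  rw [canL, ← canR, keyAlg n v w Mt]
  rw [show (∑ s : Fin n, ExteriorAlgebra.ι ℝ (v s) * ExteriorAlgebra.ι ℝ (w s))
      = ∑ k : Fin n, εn (Sum.inl k) * fK i0 k p from
    Finset.sum_congr rfl fun k _ => (hfK k).symm]
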